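/- arXiv:2202.13978 — 2 statements merged into one kernel-verified Lean document; each statement's English description precedes it below -/
import Mathlib

section
/- For every integer n ≥ 2, the polynomial identity R_{2n-1}(x) = (1+x)^{n-2} · Σ_{j=1}^{n} 2^{2-j} (2j-1)! U(n,j) x^j (1-x)^{n-j} holds in ℚ[x]. -/
/-!
Inserting a new maximum into one of the `n + 1` slots of a permutation of `[n]` replaces one
letter of its ascent word by a peak, so the change in the number of runs is local. If the
permutation has `r` runs, exactly `r` slots keep it (those next to a peak, and an end slot
that prolongs a descending first or an ascending last run), two slots add one run and the
other `n - 1 - r` add two. Summing over `S_n` gives, for `n ≥ 3`,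
`R_{n+1} = x(1-x²)R_n' + (2x + (n-1)x²)R_n`.

Write `T_{b,a} f = x(1-x²)f' + (bx + ax²)f`. Then `T_{b,a}((1+x)^s f) = (1+x)^s T_{b+s,a-s} f`,
and `T_{b,a}` multiplies `x^j(1-x)^k` by `(1+x)(j(1-x) - kx) + bx + ax²`. With `P_n` the sum
in the theorem and `Q_n` the same sum with coefficients multiplied by `j`, this gives
`T_{n,n} P_n = (1+x) Q_n` and, by the recurrence of `U`, `T_{n+1,n} Q_n = P_{n+1}`. Starting
from `R_3 = 2x + 4x²`, induction gives `R_{2n-1} = (1+x)^{n-2} P_n` and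
`R_{2n} = (1+x)^{n-1} Q_n`.
-/

open Polynomial Finset

/-- The value (in `{0,…,n-1}`) of the permutation `π` at the 0-indexed position `j`
(junk value `0` outside the range). -/
def permVal {n : ℕ} (π : Equiv.Perm (Fin n)) (j : ℕ) : ℕ :=
  if h : j < n then ((π ⟨j, h⟩ : Fin n) : ℕ) else 0

/-- `π` changes direction at the 0-indexed position `i`
(i.e. at the 1-indexed position `i+1`). -/
def changesDir {n : ℕ} (π : Equiv.Perm (Fin n)) (i : ℕ) : Prop :=
  (permVal π (i - 1) < permVal π i ∧ permVal π (i + 1) < permVal π i) ∨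
  (permVal π i < permVal π (i - 1) ∧ permVal π i < permVal π (i + 1))

instance {n : ℕ} (π : Equiv.Perm (Fin n)) (i : ℕ) : Decidable (changesDir π i) := by
  unfold changesDir; infer_instance

/-- The number of alternating runs of `π ∈ S_n`: one more than the number of
1-indexed positions `i ∈ {2,…,n-1}` (0-indexed `i ∈ {1,…,n-2}`) where `π` changes direction. -/
def altRuns (n : ℕ) (π : Equiv.Perm (Fin n)) : ℕ :=
  1 + ((Finset.Ioo 0 (n - 1)).filter (fun i => changesDir π i)).card

/-- The central factorial numbers of even indices `U(n,k)`, defined by the recurrence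
`U(n,k) = U(n-1,k-1) + k^2 * U(n-1,k)` with `U(1,1) = 1` and `U(1,k) = 0` for `k ≠ 1`. -/
def U : ℕ → ℕ → ℤ
  | 0, _ => 0
  | 1, k => if k = 1 then 1 else 0
  | _ + 2, 0 => 0
  | n + 2, k + 1 => U (n + 1) k + ((k : ℤ) + 1) ^ 2 * U (n + 1) (k + 1)

/-- The alternating run polynomial `R_n(x) = Σ_k R(n,k) x^k`. -/
noncomputable def Rpoly (n : ℕ) : Polynomial ℚ :=
  ∑ π : Equiv.Perm (Fin n), Polynomial.X ^ altRuns n π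

lemma card_filter_Ico_consecutive (P : ℕ → Prop) [DecidablePred P] {a b c : ℕ}
    (hab : a ≤ b) (hbc : b ≤ c) :
    #{i ∈ Ico a c | P i} = #{i ∈ Ico a b | P i} + #{i ∈ Ico b c | P i} := by
  simp only [card_filter, sum_Ico_consecutive _ hab hbc]

lemma card_filter_Ico_succ_top (P : ℕ → Prop) [DecidablePred P] {a b : ℕ} (hab : a ≤ b) :
    #{i ∈ Ico a (b + 1) | P i} = #{i ∈ Ico a b | P i} + if P b then 1 else 0 := by
  simp only [card_filter, sum_Ico_succ_top hab]

lemma sum_pow_eq_sum_card_nsmul {ι R : Type*} [Semiring R] (s : Finset ι) (t : Finset ℕ)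
    (g : ι → ℕ) (h : ∀ i ∈ s, g i ∈ t) (x : R) :
    ∑ i ∈ s, x ^ g i = ∑ k ∈ t, #{i ∈ s | g i = k} • x ^ k := by
  rw [← sum_fiberwise_of_maps_to h]
  refine sum_congr rfl fun k _ => ?_
  rw [sum_congr rfl fun i hi => by rw [(mem_filter.1 hi).2], sum_const]

lemma sum_Icc_one_eq_sum_range {M : Type*} [AddCommMonoid M] {f : ℕ → M}
    (h : f 0 = 0) (n : ℕ) :
    ∑ j ∈ Icc 1 n, f j = ∑ j ∈ range (n + 1), f j := by
  rw [range_eq_Ico, sum_eq_sum_Ico_succ_bot (by omega : 0 < n + 1), h, zero_add, zero_add,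
    Ico_add_one_right_eq_Icc]

section AscentWords

variable (e : ℕ → Bool)

/-- `e i` records whether a permutation ascends at position `i`; `wordRuns e L` counts the
alternating runs of a permutation with ascent word `e 0, …, e (L - 1)`. -/
def wordRuns (L : ℕ) : ℕ := 1 + #{i ∈ Ico 1 L | e (i - 1) ≠ e i}

/-- The ascent word after inserting a new maximum at slot `p`: the letter `e (p - 1)` is
replaced by the peak `true, false` (for `p = 0`, `false` is prepended). -/
def insertPeak (p j : ℕ) : Bool :=
  if j + 1 < p then e j else if j + 1 = p then true else if j = p then false else e (j - 1)

variable {e}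

lemma insertPeak_of_lt {p j : ℕ} (h : j + 1 < p) : insertPeak e p j = e j := if_pos h

lemma insertPeak_pred {p j : ℕ} (h : j + 1 = p) : insertPeak e p j = true := by
  simp [insertPeak, h]

lemma insertPeak_self {p j : ℕ} (h : j = p) : insertPeak e p j = false := by
  simp [insertPeak, h]

lemma insertPeak_of_gt {p j : ℕ} (h : p < j) : insertPeak e p j = e (j - 1) := by
  unfold insertPeak; rw [if_neg (by omega), if_neg (by omega), if_neg (by omega)]

lemma changes_insertPeak_prefix {p b : ℕ} (hb : b ≤ p - 1) :
    #{i ∈ Ico 1 b | insertPeak e p (i - 1) ≠ insertPeak e p i} =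
      #{i ∈ Ico 1 b | e (i - 1) ≠ e i} := by
  refine congrArg card (filter_congr fun i hi => ?_)
  rw [mem_Ico] at hi
  rw [insertPeak_of_lt (by omega), insertPeak_of_lt (by omega)]

lemma changes_insertPeak_suffix {p a L : ℕ} (ha : p + 2 ≤ a) :
    #{i ∈ Ico a (L + 1) | insertPeak e p (i - 1) ≠ insertPeak e p i} =
      #{i ∈ Ico (a - 1) L | e (i - 1) ≠ e i} := by
  obtain ⟨a, rfl⟩ : ∃ a', a = a' + 1 := ⟨a - 1, by omega⟩
  simp only [card_filter, Nat.add_sub_cancel, ← sum_Ico_add' _ a L 1]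
  refine sum_congr rfl fun i hi => ?_
  rw [mem_Ico] at hi
  rw [insertPeak_of_gt (by omega), insertPeak_of_gt (by omega)]
  simp only [Nat.add_sub_cancel]

variable (e) in
/-- The number of runs gained by `insertPeak e p` on a word of length `L`. -/
def peakGain (L p : ℕ) : ℕ :=
  if p = 0 then (if e 0 then 1 else 0)
  else if p = L + 1 then (if e (L - 1) then 0 else 1)
  else if p = 1 then (if e 0 then (if e 1 then 2 else 0) else 1)
  else if p = L then (if e (L - 1) then 1 else if e (L - 2) then 0 else 2)
  else if (e (p - 2) && !e (p - 1)) || (e (p - 1) && !e p) then 0 else 2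

lemma peakGain_zero (L : ℕ) : peakGain e L 0 = if e 0 then 1 else 0 := if_pos rfl

lemma peakGain_succ_self (L : ℕ) : peakGain e L (L + 1) = if e (L - 1) then 0 else 1 := by
  unfold peakGain; rw [if_neg (by omega), if_pos rfl]

lemma peakGain_one {L : ℕ} (hL : 2 ≤ L) :
    peakGain e L 1 = if e 0 then (if e 1 then 2 else 0) else 1 := by
  unfold peakGain; rw [if_neg (by omega), if_neg (by omega), if_pos rfl]

lemma peakGain_self {L : ℕ} (hL : 2 ≤ L) :
    peakGain e L L = if e (L - 1) then 1 else if e (L - 2) then 0 else 2 := by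
  unfold peakGain; rw [if_neg (by omega), if_neg (by omega), if_neg (by omega), if_pos rfl]

lemma peakGain_of_mem {L p : ℕ} (h2 : 2 ≤ p) (hpL : p + 1 ≤ L) :
    peakGain e L p = if (e (p - 2) && !e (p - 1)) || (e (p - 1) && !e p) then 0 else 2 := by
  unfold peakGain
  rw [if_neg (by omega), if_neg (by omega), if_neg (by omega), if_neg (by omega)]

lemma wordRuns_insertPeak_zero {L : ℕ} (hL : 1 ≤ L) :
    wordRuns (insertPeak e 0) (L + 1) = wordRuns e L + peakGain e L 0 := by
  simp only [wordRuns]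
  rw [card_filter_Ico_consecutive _ (by omega : 1 ≤ 2) (by omega : 2 ≤ L + 1),
    changes_insertPeak_suffix (p := 0) (a := 2) le_rfl, card_filter_Ico_succ_top _ le_rfl,
    insertPeak_self rfl, insertPeak_of_gt one_pos, peakGain_zero]
  simp only [Ico_self, filter_empty, card_empty]
  grind

lemma wordRuns_insertPeak_one {L : ℕ} (hL : 2 ≤ L) :
    wordRuns (insertPeak e 1) (L + 1) = wordRuns e L + peakGain e L 1 := by
  obtain ⟨l, rfl⟩ : ∃ l, L = l + 2 := ⟨L - 2, by omega⟩
  simp only [wordRuns]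
  rw [card_filter_Ico_consecutive _ (by omega : 1 ≤ 3) (by omega : 3 ≤ l + 2 + 1),
    card_filter_Ico_consecutive _ (by omega : 1 ≤ 2) (by omega : 2 ≤ l + 2),
    changes_insertPeak_suffix (p := 1) (a := 3) le_rfl,
    card_filter_Ico_succ_top _ (by omega : 1 ≤ 2), card_filter_Ico_succ_top _ le_rfl,
    card_filter_Ico_succ_top _ le_rfl, insertPeak_pred rfl, insertPeak_self rfl,
    insertPeak_of_gt one_lt_two, peakGain_one hL]
  simp only [Ico_self, filter_empty, card_empty]
  grind

lemma wordRuns_insertPeak_self {L : ℕ} (hL : 2 ≤ L) :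
    wordRuns (insertPeak e L) (L + 1) = wordRuns e L + peakGain e L L := by
  obtain ⟨l, rfl⟩ : ∃ l, L = l + 2 := ⟨L - 2, by omega⟩
  simp only [wordRuns]
  rw [card_filter_Ico_succ_top _ (by omega : 1 ≤ l + 2),
    card_filter_Ico_succ_top _ (by omega : 1 ≤ l + 1),
    card_filter_Ico_succ_top _ (by omega : 1 ≤ l + 1),
    changes_insertPeak_prefix (p := l + 2) (b := l + 1) (by omega), peakGain_self hL]
  grind [insertPeak]

lemma wordRuns_insertPeak_succ {L : ℕ} (hL : 1 ≤ L) :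
    wordRuns (insertPeak e (L + 1)) (L + 1) = wordRuns e L + peakGain e L (L + 1) := by
  obtain ⟨l, rfl⟩ : ∃ l, L = l + 1 := ⟨L - 1, by omega⟩
  simp only [wordRuns]
  rw [card_filter_Ico_succ_top _ (by omega : 1 ≤ l + 1),
    changes_insertPeak_prefix (p := l + 2) (b := l + 1) (by omega), peakGain_succ_self]
  grind [insertPeak]

lemma wordRuns_insertPeak_of_mem {L p : ℕ} (h2 : 2 ≤ p) (hpL : p + 1 ≤ L) :
    wordRuns (insertPeak e p) (L + 1) = wordRuns e L + peakGain e L p := by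
  obtain ⟨q, rfl⟩ : ∃ q, p = q + 2 := ⟨p - 2, by omega⟩
  simp only [wordRuns, peakGain_of_mem h2 hpL]
  rw [card_filter_Ico_consecutive _ (by omega : 1 ≤ q + 4) (by omega : q + 4 ≤ L + 1),
    card_filter_Ico_consecutive _ (by omega : 1 ≤ q + 3) (by omega : q + 3 ≤ L),
    changes_insertPeak_suffix (p := q + 2) (a := q + 4) (by omega),
    card_filter_Ico_succ_top _ (by omega : 1 ≤ q + 3),
    card_filter_Ico_succ_top _ (by omega : 1 ≤ q + 2),
    card_filter_Ico_succ_top _ (by omega : 1 ≤ q + 1),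
    changes_insertPeak_prefix (p := q + 2) (b := q + 1) (by omega),
    card_filter_Ico_succ_top _ (by omega : 1 ≤ q + 2),
    card_filter_Ico_succ_top _ (by omega : 1 ≤ q + 1)]
  grind [insertPeak]

lemma wordRuns_insertPeak {L p : ℕ} (hL : 2 ≤ L) (hp : p ≤ L + 1) :
    wordRuns (insertPeak e p) (L + 1) = wordRuns e L + peakGain e L p := by
  obtain rfl | rfl | rfl | ⟨h2, hpL⟩ | rfl :
      p = 0 ∨ p = 1 ∨ p = L ∨ (2 ≤ p ∧ p + 1 ≤ L) ∨ p = L + 1 := by omega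
  · exact wordRuns_insertPeak_zero (by omega)
  · exact wordRuns_insertPeak_one hL
  · exact wordRuns_insertPeak_self hL
  · exact wordRuns_insertPeak_of_mem h2 hpL
  · exact wordRuns_insertPeak_succ (by omega)

lemma peakGain_le_two (L p : ℕ) : peakGain e L p ≤ 2 := by
  unfold peakGain; split_ifs <;> omega

lemma peakGain_succ_of_lt {L p : ℕ} (hp : p < L) : peakGain e (L + 1) p = peakGain e L p := by
  unfold peakGain
  simp only [show p ≠ L + 1 + 1 by omega, show p ≠ L + 1 by omega, show p ≠ L by omega,
    if_false]

lemma wordRuns_succ {L : ℕ} (hL : 1 ≤ L) :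
    wordRuns e (L + 1) = wordRuns e L + if e (L - 1) ≠ e L then 1 else 0 := by
  simp only [wordRuns, card_filter_Ico_succ_top _ hL]
  ring

lemma wordRuns_le {L : ℕ} (hL : 1 ≤ L) : wordRuns e L ≤ L := by
  have := card_filter_le (Ico 1 L) (fun i => e (i - 1) ≠ e i)
  rw [Nat.card_Ico] at this
  unfold wordRuns
  omega

lemma card_peakGain_eq_one {L : ℕ} (hL : 2 ≤ L) :
    #{p ∈ range (L + 2) | peakGain e L p = 1} = 2 := by
  obtain ⟨l, rfl⟩ : ∃ l, L = l + 2 := ⟨L - 2, by omega⟩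
  have hmid : #{p ∈ Ico 2 (l + 2) | peakGain e (l + 2) p = 1} = 0 := by
    refine card_eq_zero.2 (filter_eq_empty_iff.2 fun p hp => ?_)
    rw [mem_Ico] at hp
    rw [peakGain_of_mem hp.1 (by omega)]
    split_ifs <;> simp
  rw [range_eq_Ico, card_filter_Ico_consecutive _ (by omega : 0 ≤ 2) (by omega : 2 ≤ l + 2 + 2),
    card_filter_Ico_consecutive _ (by omega : 2 ≤ l + 2) (by omega : l + 2 ≤ l + 2 + 2), hmid,
    card_filter_Ico_succ_top _ (by omega : 0 ≤ 1), card_filter_Ico_succ_top _ le_rfl,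
    card_filter_Ico_succ_top _ (by omega : l + 2 ≤ l + 3), card_filter_Ico_succ_top _ le_rfl]
  rw [peakGain_zero, peakGain_one (by omega), peakGain_self (by omega), peakGain_succ_self]
  simp only [Ico_self, filter_empty, card_empty]
  grind

lemma card_peakGain_eq_zero {L : ℕ} (hL : 2 ≤ L) :
    #{p ∈ range (L + 2) | peakGain e L p = 0} = wordRuns e L := by
  induction L, hL using Nat.le_induction with
  | base =>
    rw [range_eq_Ico, card_filter_Ico_succ_top _ (by omega : 0 ≤ 3),
      card_filter_Ico_succ_top _ (by omega : 0 ≤ 2),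
      card_filter_Ico_succ_top _ (by omega : 0 ≤ 1), card_filter_Ico_succ_top _ le_rfl]
    rw [peakGain_zero, peakGain_one le_rfl, peakGain_self le_rfl, peakGain_succ_self, wordRuns,
      card_filter_Ico_succ_top _ le_rfl]
    simp only [Ico_self, filter_empty, card_empty]
    grind
  | succ L hL ih =>
    -- appending the letter `e L` only affects the last three slots
    have hprefix :
        #{p ∈ Ico 0 L | peakGain e (L + 1) p = 0} = #{p ∈ Ico 0 L | peakGain e L p = 0} :=
      congrArg card (filter_congr fun p hp => by rw [peakGain_succ_of_lt (mem_Ico.1 hp).2])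
    rw [wordRuns_succ (by omega), ← ih, range_eq_Ico, range_eq_Ico,
      card_filter_Ico_succ_top _ (by omega : 0 ≤ L + 2),
      card_filter_Ico_succ_top _ (by omega : 0 ≤ L + 1),
      card_filter_Ico_succ_top _ (by omega : 0 ≤ L), hprefix,
      card_filter_Ico_succ_top _ (by omega : 0 ≤ L + 1),
      card_filter_Ico_succ_top _ (by omega : 0 ≤ L)]
    rw [peakGain_of_mem hL le_rfl, peakGain_self (by omega), peakGain_succ_self,
      peakGain_self hL, peakGain_succ_self]
    grind

lemma wordRuns_congr {e e' : ℕ → Bool} {L : ℕ} (h : ∀ j < L, e j = e' j) :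
    wordRuns e L = wordRuns e' L := by
  unfold wordRuns
  congr 2
  refine filter_congr fun i hi => ?_
  rw [mem_Ico] at hi
  rw [h i hi.2, h (i - 1) (by omega)]

end AscentWords

section Operator

variable {R : Type*} [CommRing R]

noncomputable def altRunOp (b a : R) : R[X] →ₗ[R] R[X] :=
  LinearMap.mulLeft R (X * (1 - X ^ 2)) ∘ₗ derivative +
    LinearMap.mulLeft R (C b * X + C a * X ^ 2)

lemma altRunOp_apply (b a : R) (f : R[X]) :
    altRunOp b a f = X * (1 - X ^ 2) * derivative f + (C b * X + C a * X ^ 2) * f := rfl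

lemma altRunOp_C_mul (b a c : R) (f : R[X]) : altRunOp b a (C c * f) = C c * altRunOp b a f := by
  simp only [C_mul', map_smul]

lemma mul_derivative_pow (p : R[X]) (k : ℕ) :
    p * derivative (p ^ k) = k * derivative p * p ^ k := by
  rcases k with _ | k
  · simp
  · rw [derivative_pow, Nat.add_sub_cancel, map_natCast]; ring

lemma altRunOp_X_pow (b a : R) (r : ℕ) :
    altRunOp b a (X ^ r) = C (r : R) * X ^ r + C b * X ^ (r + 1) + C (a - r) * X ^ (r + 2) := by
  have h := mul_derivative_pow (X : R[X]) r
  rw [derivative_X, mul_one] at h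
  rw [altRunOp_apply]
  simp only [map_sub, map_natCast]
  linear_combination (1 - X ^ 2) * h

lemma X_mul_derivative_X_pow_mul_one_sub_X_pow (j k : ℕ) :
    X * (1 - X) * derivative (X ^ j * (1 - X) ^ k : R[X]) =
      ((j : R[X]) * (1 - X) - (k : R[X]) * X) * (X ^ j * (1 - X) ^ k) := by
  have hX := mul_derivative_pow (X : R[X]) j
  have h1X := mul_derivative_pow (1 - X : R[X]) k
  rw [derivative_X] at hX
  rw [derivative_sub, derivative_one, derivative_X] at h1X
  rw [derivative_mul]
  linear_combination (1 - X) * (1 - X) ^ k * hX + X * X ^ j * h1X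

lemma altRunOp_X_pow_mul_one_sub_X_pow (b a : R) (j k : ℕ) :
    altRunOp b a (X ^ j * (1 - X) ^ k) =
      ((1 + X) * ((j : R[X]) * (1 - X) - (k : R[X]) * X) + C b * X + C a * X ^ 2) *
        (X ^ j * (1 - X) ^ k) := by
  rw [altRunOp_apply, show X * (1 - X ^ 2) = (1 + X) * (X * (1 - X) : R[X]) by ring, mul_assoc,
    X_mul_derivative_X_pow_mul_one_sub_X_pow]
  ring

lemma altRunOp_one_add_X_pow_mul (b a : R) (s : ℕ) (f : R[X]) :
    altRunOp b a ((1 + X) ^ s * f) = (1 + X) ^ s * altRunOp (b + s) (a - s) f := by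
  have h := mul_derivative_pow (1 + X : R[X]) s
  rw [derivative_add, derivative_one, derivative_X] at h
  rw [altRunOp_apply, altRunOp_apply, derivative_mul]
  simp only [map_add, map_sub, map_natCast]
  linear_combination X * (1 - X) * f * h

end Operator

lemma sum_X_pow_wordRuns_insertPeak (e : ℕ → Bool) {L : ℕ} (hL : 2 ≤ L) :
    ∑ p ∈ range (L + 2), (X : ℚ[X]) ^ wordRuns (insertPeak e p) (L + 1) =
      altRunOp 2 (L : ℚ) (X ^ wordRuns e L) := by
  have hgain : ∀ p ∈ range (L + 2), peakGain e L p ∈ range 3 :=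
    fun p _ => mem_range.2 (Nat.lt_succ_of_le (peakGain_le_two L p))
  have hcard := card_eq_sum_card_fiberwise hgain
  simp only [sum_range_succ, sum_range_zero, card_range, zero_add, card_peakGain_eq_zero hL,
    card_peakGain_eq_one hL] at hcard
  have hr := wordRuns_le (e := e) (by omega : 1 ≤ L)
  rw [sum_congr rfl fun p hp => by
      rw [wordRuns_insertPeak hL (Nat.lt_succ_iff.1 (mem_range.1 hp)), pow_add],
    ← mul_sum, sum_pow_eq_sum_card_nsmul _ _ _ hgain, altRunOp_X_pow]
  simp only [sum_range_succ, sum_range_zero, zero_add, card_peakGain_eq_zero hL,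
    card_peakGain_eq_one hL,
    show #{p ∈ range (L + 2) | peakGain e L p = 2} = L - wordRuns e L by omega,
    nsmul_eq_mul, Nat.cast_sub hr]
  simp only [map_sub, map_natCast, map_ofNat]
  ring

section Permutations

variable {m : ℕ}

def ascents {n : ℕ} (σ : Equiv.Perm (Fin n)) (i : ℕ) : Bool :=
  decide (permVal σ i < permVal σ (i + 1))

lemma permVal_of_lt {n : ℕ} (σ : Equiv.Perm (Fin n)) {j : ℕ} (h : j < n) :
    permVal σ j = σ ⟨j, h⟩ := dif_pos h

lemma permVal_lt {n : ℕ} (σ : Equiv.Perm (Fin n)) {j : ℕ} (h : j < n) : permVal σ j < n := by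
  rw [permVal_of_lt σ h]; exact (σ _).isLt

lemma permVal_injOn {n : ℕ} (σ : Equiv.Perm (Fin n)) {i j : ℕ} (hi : i < n) (hj : j < n)
    (h : permVal σ i = permVal σ j) : i = j := by
  rw [permVal_of_lt σ hi, permVal_of_lt σ hj] at h
  simpa using σ.injective (Fin.ext h)

lemma changesDir_iff {n : ℕ} (σ : Equiv.Perm (Fin n)) {i : ℕ} (h0 : 0 < i) (h1 : i < n - 1) :
    changesDir σ i ↔ ascents σ (i - 1) ≠ ascents σ i := by
  have hprev := permVal_injOn σ (i := i - 1) (j := i) (by omega) (by omega)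
  have hnext := permVal_injOn σ (i := i) (j := i + 1) (by omega) (by omega)
  unfold changesDir ascents
  rw [show i - 1 + 1 = i by omega]
  grind

lemma altRuns_eq_wordRuns {n : ℕ} (σ : Equiv.Perm (Fin n)) :
    altRuns n σ = wordRuns (ascents σ) (n - 1) := by
  unfold altRuns wordRuns
  rw [← Ico_add_one_left_eq_Ioo]
  congr 2
  exact filter_congr fun i hi => changesDir_iff σ (mem_Ico.1 hi).1 (mem_Ico.1 hi).2

def insertMax (σ : Equiv.Perm (Fin m)) (p : Fin (m + 1)) : Equiv.Perm (Fin (m + 1)) :=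
  (finSuccEquiv' p).trans (σ.optionCongr.trans (finSuccEquiv' (Fin.last m)).symm)

lemma insertMax_apply_self (σ : Equiv.Perm (Fin m)) (p : Fin (m + 1)) :
    insertMax σ p p = Fin.last m := by
  simp [insertMax, finSuccEquiv'_at, finSuccEquiv'_symm_none]

lemma insertMax_apply_succAbove (σ : Equiv.Perm (Fin m)) (p : Fin (m + 1)) (i : Fin m) :
    insertMax σ p (p.succAbove i) = (σ i).castSucc := by
  simp [insertMax, finSuccEquiv'_succAbove, finSuccEquiv'_symm_some]

lemma permVal_insertMax (σ : Equiv.Perm (Fin m)) (p : Fin (m + 1)) {j : ℕ} (hj : j ≤ m) :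
    permVal (insertMax σ p) j =
      if j < p then permVal σ j else if j = p then m else permVal σ (j - 1) := by
  rw [permVal_of_lt _ (by omega : j < m + 1)]
  split_ifs with hlt heq
  · rw [permVal_of_lt σ (by omega : j < m),
      show (⟨j, _⟩ : Fin (m + 1)) = p.succAbove ⟨j, by omega⟩ from
        (Fin.succAbove_of_castSucc_lt p ⟨j, by omega⟩ hlt).symm, insertMax_apply_succAbove]
    rfl
  · rw [show (⟨j, _⟩ : Fin (m + 1)) = p from Fin.ext heq, insertMax_apply_self]
    rfl
  · rw [permVal_of_lt σ (by omega : j - 1 < m),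
      show (⟨j, _⟩ : Fin (m + 1)) = p.succAbove ⟨j - 1, by omega⟩ by
        rw [Fin.succAbove_of_le_castSucc _ _ (Fin.le_def.2 (by simp only [Fin.castSucc_mk]; omega))]
        exact Fin.ext (by simp only [Fin.succ_mk]; omega), insertMax_apply_succAbove]
    rfl

lemma ascents_insertMax (σ : Equiv.Perm (Fin m)) (p : Fin (m + 1)) {j : ℕ} (hj : j < m) :
    ascents (insertMax σ p) j = insertPeak (ascents σ) p j := by
  unfold ascents
  rw [permVal_insertMax σ p hj.le, permVal_insertMax σ p (by omega : j + 1 ≤ m)]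
  obtain h | h | h | h : j + 1 < p ∨ j + 1 = p ∨ j = p ∨ p < j := by omega
  · rw [insertPeak_of_lt h, if_pos (by omega), if_pos h]
  · rw [insertPeak_pred h, if_pos (by omega), if_neg (by omega), if_pos h]
    simpa using permVal_lt σ hj
  · rw [insertPeak_self h, if_neg (by omega), if_pos h, if_neg (by omega), if_neg (by omega)]
    simpa using (permVal_lt σ hj).le
  · rw [insertPeak_of_gt h, if_neg (by omega), if_neg (by omega), if_neg (by omega),
      if_neg (by omega), Nat.add_sub_cancel, Nat.sub_add_cancel (by omega)]

lemma insertMax_symm_last (σ : Equiv.Perm (Fin m)) (p : Fin (m + 1)) :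
    (insertMax σ p).symm (Fin.last m) = p := by
  rw [Equiv.symm_apply_eq, insertMax_apply_self]

lemma insertMax_bijective (m : ℕ) :
    Function.Bijective fun x : Equiv.Perm (Fin m) × Fin (m + 1) => insertMax x.1 x.2 := by
  refine (Fintype.bijective_iff_injective_and_card _).2
    ⟨fun ⟨σ, p⟩ ⟨σ', p'⟩ h => ?_, ?_⟩
  · dsimp only at h
    obtain rfl : p = p' := by rw [← insertMax_symm_last σ p, h, insertMax_symm_last]
    have hσ : σ = σ' := Equiv.ext fun i => Fin.castSucc_injective m <| by
      rw [← insertMax_apply_succAbove, ← insertMax_apply_succAbove]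
      exact congrArg (fun τ : Equiv.Perm _ => τ (p.succAbove i)) h
    rw [hσ]
  · simp [Fintype.card_perm, Nat.factorial_succ, mul_comm]

theorem Rpoly_succ_succ {L : ℕ} (hL : 2 ≤ L) :
    Rpoly (L + 2) = altRunOp 2 (L : ℚ) (Rpoly (L + 1)) := by
  rw [Rpoly, ← (insertMax_bijective (L + 1)).sum_comp, Fintype.sum_prod_type, Rpoly, map_sum]
  refine sum_congr rfl fun σ _ => ?_
  rw [altRuns_eq_wordRuns, Nat.add_sub_cancel, ← sum_X_pow_wordRuns_insertPeak _ hL,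
    ← Fin.sum_univ_eq_sum_range
      (fun p => (X : ℚ[X]) ^ wordRuns (insertPeak (ascents σ) p) (L + 1))]
  refine sum_congr rfl fun p _ => ?_
  rw [altRuns_eq_wordRuns, show L + 2 - 1 = L + 1 by omega]
  exact congrArg _ (wordRuns_congr fun j hj => ascents_insertMax σ p hj)

end Permutations

lemma U_succ_succ {n : ℕ} (hn : 1 ≤ n) (k : ℕ) :
    U (n + 1) (k + 1) = U n k + ((k : ℤ) + 1) ^ 2 * U n (k + 1) := by
  obtain ⟨t, rfl⟩ : ∃ t, n = t + 1 := ⟨n - 1, by omega⟩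
  rfl

lemma U_zero_right {n : ℕ} (hn : 1 ≤ n) : U n 0 = 0 := by
  obtain _ | _ | n := n
  · omega
  · rfl
  · rfl

lemma U_eq_zero_of_lt {n k : ℕ} (h : n < k) : U n k = 0 := by
  induction n generalizing k with
  | zero => rfl
  | succ n ih =>
    obtain ⟨k, rfl⟩ : ∃ k', k = k' + 1 := ⟨k - 1, by omega⟩
    rcases Nat.eq_zero_or_pos n with rfl | hn
    · simp [U, show k ≠ 0 by omega]
    · rw [U_succ_succ hn, ih (by omega), ih (by omega), mul_zero, add_zero]

noncomputable def runCoeff (n j : ℕ) : ℚ :=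
  (2 : ℚ) ^ ((2 : ℤ) - (j : ℤ)) * ((2 * j - 1).factorial : ℚ) * (U n j : ℚ)

lemma runCoeff_zero_right {n : ℕ} (hn : 1 ≤ n) : runCoeff n 0 = 0 := by
  simp [runCoeff, U_zero_right hn]

lemma runCoeff_eq_zero_of_lt {n j : ℕ} (h : n < j) : runCoeff n j = 0 := by
  simp [runCoeff, U_eq_zero_of_lt h]

lemma runCoeff_succ_succ {n : ℕ} (hn : 1 ≤ n) (k : ℕ) :
    runCoeff (n + 1) (k + 1) =
      k * (2 * k + 1) * runCoeff n k + (k + 1) ^ 2 * runCoeff n (k + 1) := by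
  rcases Nat.eq_zero_or_pos k with rfl | hk
  · simp [runCoeff, U_succ_succ hn, U_zero_right hn]
  obtain ⟨k, rfl⟩ : ∃ k', k = k' + 1 := ⟨k - 1, by omega⟩
  have hfact : ((2 * (k + 2) - 1).factorial : ℚ) =
      (2 * k + 3) * (2 * k + 2) * (2 * (k + 1) - 1).factorial := by
    rw [show 2 * (k + 2) - 1 = (2 * (k + 1) - 1) + 1 + 1 by omega, Nat.factorial_succ,
      Nat.factorial_succ]
    push_cast [show 2 * (k + 1) - 1 = 2 * k + 1 by omega]
    ring
  have hpow :
      (2 : ℚ) ^ ((2 : ℤ) - ((k + 2 : ℕ) : ℤ)) =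
        (2 : ℚ) ^ ((2 : ℤ) - ((k + 1 : ℕ) : ℤ)) / 2 := by
    rw [div_eq_mul_inv, ← zpow_sub_one₀ (two_ne_zero' ℚ)]; congr 1; push_cast; ring
  simp only [runCoeff, U_succ_succ hn, hfact, hpow]
  push_cast
  ring

noncomputable def oddFactor (n : ℕ) : ℚ[X] :=
  ∑ j ∈ Icc 1 n, C (runCoeff n j) * X ^ j * (1 - X) ^ (n - j)

noncomputable def evenFactor (n : ℕ) : ℚ[X] :=
  ∑ j ∈ Icc 1 n, C (j * runCoeff n j) * X ^ j * (1 - X) ^ (n - j)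

lemma altRunOp_oddFactor (n : ℕ) :
    altRunOp (n : ℚ) n (oddFactor n) = (1 + X) * evenFactor n := by
  simp only [oddFactor, evenFactor, map_sum, mul_sum]
  refine sum_congr rfl fun j hj => ?_
  rw [mem_Icc] at hj
  rw [mul_assoc, altRunOp_C_mul, altRunOp_X_pow_mul_one_sub_X_pow, Nat.cast_sub hj.2]
  simp only [map_mul, map_natCast]
  ring

lemma altRunOp_evenFactor {n : ℕ} (hn : 1 ≤ n) :
    altRunOp (n + 1 : ℚ) n (evenFactor n) = oddFactor (n + 1) := by
  set g : ℕ → ℚ[X] := fun j => C (j ^ 2 * runCoeff n j) * X ^ j * (1 - X) ^ (n + 1 - j)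
  set h : ℕ → ℚ[X] := fun j =>
    C (j * (2 * j + 1) * runCoeff n j) * X ^ (j + 1) * (1 - X) ^ (n - j)
  have hterm : ∀ j ∈ Icc 1 n,
      altRunOp (n + 1 : ℚ) n (C (j * runCoeff n j) * X ^ j * (1 - X) ^ (n - j)) = g j + h j := by
    intro j hj
    rw [mem_Icc] at hj
    simp only [g, h]
    rw [mul_assoc, altRunOp_C_mul, altRunOp_X_pow_mul_one_sub_X_pow, Nat.cast_sub hj.2,
      show n + 1 - j = n - j + 1 by omega]
    simp only [map_mul, map_natCast, map_add, map_pow, map_ofNat, pow_succ]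
    ring
  have hg : ∑ j ∈ range (n + 1), g j = ∑ i ∈ range (n + 1), g (i + 1) := by
    rw [sum_range_succ' g, sum_range_succ (fun i => g (i + 1))]
    simp [g, runCoeff_eq_zero_of_lt (Nat.lt_succ_self n)]
  rw [oddFactor, sum_Icc_one_eq_sum_range (by simp [runCoeff_zero_right (by omega : 1 ≤ n + 1)]),
    sum_range_succ', runCoeff_zero_right (by omega), evenFactor, map_sum, sum_congr rfl hterm,
    sum_Icc_one_eq_sum_range (by simp [g, h]), sum_add_distrib, hg, ← sum_add_distrib]
  simp only [map_zero, zero_mul, add_zero]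
  -- `runCoeff_succ_succ` merges `h i` with `g (i + 1)`
  refine sum_congr rfl fun i _ => ?_
  rw [runCoeff_succ_succ hn, show n + 1 - (i + 1) = n - i by omega]
  simp only [g, h, map_add, map_mul, map_natCast, map_pow, map_one, map_ofNat]
  push_cast
  ring

lemma Rpoly_three : Rpoly 3 = 2 * X + 4 * X ^ 2 := by
  rw [Rpoly, sum_pow_eq_sum_card_nsmul univ {1, 2} (altRuns 3) (by decide), sum_pair (by norm_num),
    show #{π ∈ univ | altRuns 3 π = 1} = 2 by decide,
    show #{π ∈ univ | altRuns 3 π = 2} = 4 by decide]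
  simp only [nsmul_eq_mul, pow_one, Nat.cast_ofNat]

lemma oddFactor_two : oddFactor 2 = 2 * X + 4 * X ^ 2 := by
  have h1 : runCoeff 2 1 = 2 := by norm_num [runCoeff, U]
  have h2 : runCoeff 2 2 = 6 := by norm_num [runCoeff, U]
  rw [oddFactor, sum_Icc_succ_top (by norm_num), Icc_self, sum_singleton, h1, h2,
    map_ofNat C 2, map_ofNat C 6]
  ring

theorem Rpoly_two_mul_add_three (k : ℕ) :
    Rpoly (2 * k + 3) = (1 + X) ^ k * oddFactor (k + 2) := by
  induction k with
  | zero => rw [Rpoly_three, oddFactor_two, pow_zero, one_mul]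
  | succ k ih =>
    have heven : Rpoly (2 * k + 4) = (1 + X) ^ (k + 1) * evenFactor (k + 2) := by
      rw [Rpoly_succ_succ (L := 2 * k + 2) (by omega), ih, altRunOp_one_add_X_pow_mul, pow_succ,
        mul_assoc, ← altRunOp_oddFactor]
      congr 3 <;> push_cast <;> ring
    rw [show 2 * (k + 1) + 3 = 2 * k + 3 + 2 by ring, Rpoly_succ_succ (by omega), heven,
      altRunOp_one_add_X_pow_mul, ← altRunOp_evenFactor (by omega)]
    congr 3 <;> push_cast <;> ring

/-- For `n ≥ 2`, `R_{2n-1}(x) = (1+x)^{n-2} Σ_{j=1}^n 2^{2-j} (2j-1)! U(n,j) x^j (1-x)^{n-j}`. -/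
theorem stmt0 (n : ℕ) (hn : 2 ≤ n) :
    Rpoly (2 * n - 1) =
      (1 + Polynomial.X) ^ (n - 2) *
        ∑ j ∈ Finset.Icc 1 n,
          Polynomial.C ((2 : ℚ) ^ ((2 : ℤ) - (j : ℤ)) * ((2 * j - 1).factorial : ℚ) * (U n j : ℚ)) *
            Polynomial.X ^ j * (1 - Polynomial.X) ^ (n - j) := by
  obtain ⟨k, rfl⟩ : ∃ k, n = k + 2 := ⟨n - 2, by omega⟩
  rw [show 2 * (k + 2) - 1 = 2 * k + 3 by omega, Nat.add_sub_cancel]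
  exact Rpoly_two_mul_add_three k
end

section
/- For every integer n ≥ 1, the polynomial identity x · P_{2n}(x) = Σ_{j=1}^{n} 2^{2n−2j} (2j)! U(n,j) x^j (1−x)^{n−j} holds in ℤ[x]. -/
open Polynomial Finset

/-- The number of interior peaks of `π ∈ S_n`: 1-indexed positions `i ∈ {2,…,n-1}`
(0-indexed `i ∈ {1,…,n-2}`) with `π(i-1) < π(i) > π(i+1)`. -/
def pk (n : ℕ) (π : Equiv.Perm (Fin n)) : ℕ :=
  ((Finset.Ioo 0 (n - 1)).filter (fun i =>
    permVal π (i - 1) < permVal π i ∧ permVal π (i + 1) < permVal π i)).card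

/-- The peak polynomial `P_n(x) = Σ_{π ∈ S_n} x^{pk(π)}`. -/
noncomputable def Ppoly (n : ℕ) : Polynomial ℤ :=
  ∑ π : Equiv.Perm (Fin n), Polynomial.X ^ pk n π

def insFun {m : ℕ} (π : Equiv.Perm (Fin m)) (i : Fin (m + 1)) : Fin (m + 1) → Fin (m + 1) :=
  i.insertNth (Fin.last m) (fun q => (π q).castSucc)

def insInv {m : ℕ} (π : Equiv.Perm (Fin m)) (i : Fin (m + 1)) : Fin (m + 1) → Fin (m + 1) :=
  fun v => if h : v = Fin.last m then i else i.succAbove (π.symm (v.castPred h))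

lemma insFun_succAbove {m : ℕ} (π : Equiv.Perm (Fin m)) (i : Fin (m + 1)) (q : Fin m) :
    insFun π i (i.succAbove q) = (π q).castSucc := Fin.insertNth_apply_succAbove i _ _ _

lemma insFun_same {m : ℕ} (π : Equiv.Perm (Fin m)) (i : Fin (m + 1)) :
    insFun π i i = Fin.last m := Fin.insertNth_apply_same i _ _

/-- Insert the new maximum at position `i`. -/
def ins {m : ℕ} (π : Equiv.Perm (Fin m)) (i : Fin (m + 1)) : Equiv.Perm (Fin (m + 1)) where
  toFun := insFun π i
  invFun := insInv π i
  left_inv := by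
    intro j
    by_cases h : j = i
    · subst h; rw [insFun_same]; simp [insInv]
    · obtain ⟨q, rfl⟩ := Fin.exists_succAbove_eq h
      rw [insFun_succAbove]
      have h1 : (π q).castSucc ≠ Fin.last m := (Fin.castSucc_lt_last _).ne
      rw [insInv, dif_neg h1]
      simp
  right_inv := by
    intro v
    by_cases h : v = Fin.last m
    · subst h; rw [insInv, dif_pos rfl, insFun_same]
    · rw [insInv, dif_neg h, insFun_succAbove]
      simp

lemma ins_apply {m : ℕ} (π : Equiv.Perm (Fin m)) (i : Fin (m + 1)) (j : Fin (m + 1)) :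
    ins π i j = insFun π i j := rfl

lemma permVal_lt_s6 {m : ℕ} (hm : 1 ≤ m) (π : Equiv.Perm (Fin m)) (j : ℕ) : permVal π j < m := by
  unfold permVal
  split
  · exact (π _).isLt
  · omega

lemma permVal_ins {m : ℕ} (π : Equiv.Perm (Fin m)) (i : Fin (m + 1)) (j : ℕ) :
    permVal (ins π i) j =
      if j < (i : ℕ) then permVal π j
      else if j = (i : ℕ) then m
      else if j < m + 1 then permVal π (j - 1) else 0 := by
  unfold permVal
  by_cases hj : j < m + 1
  · rw [dif_pos hj, ins_apply]
    rcases lt_trichotomy j (i : ℕ) with h | h | h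
    · rw [if_pos h]
      have hjm : j < m := by omega
      have e : (⟨j, hj⟩ : Fin (m + 1)) = i.succAbove ⟨j, hjm⟩ := by
        rw [Fin.succAbove_of_castSucc_lt]
        · rfl
        · exact h
      rw [e, insFun_succAbove]
      simp [hjm]
    · have e : (⟨j, hj⟩ : Fin (m + 1)) = i := by exact Fin.ext h
      rw [e, insFun_same]
      simp [h]
    · rw [if_neg (by omega), if_neg (by omega), if_pos hj]
      have hjm : j - 1 < m := by omega
      have e : (⟨j, hj⟩ : Fin (m + 1)) = i.succAbove ⟨j - 1, hjm⟩ := by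
        rw [Fin.succAbove_of_le_castSucc]
        · exact Fin.ext (by simp; omega)
        · exact Fin.le_castSucc_iff.mpr (by simp [Fin.lt_def]; omega)
      rw [e, insFun_succAbove]
      simp [hjm]
  · rw [dif_neg hj, if_neg (by omega), if_neg (by omega), if_neg hj]

lemma permVal_ins_lt {m : ℕ} (π : Equiv.Perm (Fin m)) (i : Fin (m + 1)) {j : ℕ}
    (h : j < (i : ℕ)) : permVal (ins π i) j = permVal π j := by
  rw [permVal_ins, if_pos h]

lemma permVal_ins_eq {m : ℕ} (π : Equiv.Perm (Fin m)) (i : Fin (m + 1)) {j : ℕ}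
    (h : j = (i : ℕ)) : permVal (ins π i) j = m := by
  rw [permVal_ins, if_neg (by omega), if_pos h]

lemma permVal_ins_gt {m : ℕ} (π : Equiv.Perm (Fin m)) (i : Fin (m + 1)) {j : ℕ}
    (h : (i : ℕ) < j) (h2 : j < m + 1) : permVal (ins π i) j = permVal π (j - 1) := by
  rw [permVal_ins, if_neg (by omega), if_neg (by omega), if_pos h2]

/-- The peak set, as a finset of naturals. -/
def peaks (n : ℕ) (π : Equiv.Perm (Fin n)) : Finset ℕ :=
  (Finset.Ioo 0 (n - 1)).filter (fun p =>
    permVal π (p - 1) < permVal π p ∧ permVal π (p + 1) < permVal π p)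

lemma pk_eq_card_peaks (n : ℕ) (π : Equiv.Perm (Fin n)) : pk n π = (peaks n π).card := rfl

/-- position shift for peaks under insertion at `i` -/
def phi (i : ℕ) (q : ℕ) : ℕ := if q + 1 < i then q else if i < q then q + 1 else i

lemma peaks_ins {m : ℕ} (hm : 1 ≤ m) (π : Equiv.Perm (Fin m)) (i : Fin (m + 1)) :
    peaks (m + 1) (ins π i) =
      (peaks m π).image (phi (i : ℕ)) ∪
        ({(i : ℕ)} : Finset ℕ).filter (fun _ => 0 < (i : ℕ) ∧ (i : ℕ) < m) := by
  have hv : ∀ t, permVal π t < m := permVal_lt_s6 hm π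
  ext p
  simp only [peaks, mem_union, mem_image, mem_filter, mem_Ioo, mem_singleton,
    Nat.add_sub_cancel]
  constructor
  · rintro ⟨⟨hp0, hpm⟩, h1, h2⟩
    rcases lt_trichotomy p (i : ℕ) with hpi | hpi | hpi
    · rw [permVal_ins_lt π i hpi] at h1 h2
      rw [permVal_ins_lt π i (show p - 1 < (i : ℕ) by omega)] at h1
      by_cases hp1 : p + 1 < (i : ℕ)
      · rw [permVal_ins_lt π i hp1] at h2
        left
        exact ⟨p, ⟨⟨by omega, by omega⟩, h1, h2⟩, by simp [phi, hp1]⟩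
      · rw [permVal_ins_eq π i (show p + 1 = (i : ℕ) by omega)] at h2
        exact absurd h2 (by have := hv p; omega)
    · right
      exact ⟨hpi, by omega, by omega⟩
    · rw [permVal_ins_gt π i hpi (by omega)] at h1 h2
      rw [permVal_ins_gt π i (j := p + 1) (by omega) (by omega)] at h2
      rw [show p + 1 - 1 = p - 1 + 1 by omega] at h2
      by_cases hp1 : (i : ℕ) < p - 1
      · rw [permVal_ins_gt π i (j := p - 1) hp1 (by omega)] at h1
        left
        refine ⟨p - 1, ⟨⟨by omega, by omega⟩, ?_, h2⟩, ?_⟩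
        · rwa [show p - 1 - 1 = p - 1 - 1 from rfl]
        · simp only [phi]
          rw [if_neg (by omega), if_pos (by omega)]
          omega
      · rw [permVal_ins_eq π i (show p - 1 = (i : ℕ) by omega)] at h1
        exact absurd h1 (by have := hv (p - 1); omega)
  · rintro (⟨q, ⟨⟨hq0, hqm⟩, h1, h2⟩, rfl⟩ | ⟨rfl, hi0, him⟩)
    · unfold phi
      by_cases c1 : q + 1 < (i : ℕ)
      · rw [if_pos c1]
        refine ⟨⟨hq0, by omega⟩, ?_, ?_⟩
        · rw [permVal_ins_lt π i (show q - 1 < (i : ℕ) by omega),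
            permVal_ins_lt π i (show q < (i : ℕ) by omega)]
          exact h1
        · rw [permVal_ins_lt π i (show q < (i : ℕ) by omega), permVal_ins_lt π i c1]
          exact h2
      · by_cases c2 : (i : ℕ) < q
        · rw [if_neg c1, if_pos c2]
          refine ⟨⟨by omega, by omega⟩, ?_, ?_⟩
          · rw [permVal_ins_gt π i (j := q + 1) (by omega) (by omega),
              permVal_ins_gt π i (j := q + 1 - 1) (by omega) (by omega)]
            rw [show q + 1 - 1 = q by omega]
            exact h1
          · rw [permVal_ins_gt π i (j := q + 1) (by omega) (by omega),
              permVal_ins_gt π i (j := q + 1 + 1) (by omega) (by omega)]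
            rw [show q + 1 - 1 = q by omega, show q + 1 + 1 - 1 = q + 1 by omega]
            exact h2
        · rw [if_neg c1, if_neg c2]
          have hiq : (i : ℕ) = q ∨ (i : ℕ) = q + 1 := by omega
          refine ⟨⟨by omega, by omega⟩, ?_, ?_⟩
          · rw [permVal_ins_eq π i rfl,
              permVal_ins_lt π i (show (i : ℕ) - 1 < (i : ℕ) by omega)]
            exact hv _
          · rw [permVal_ins_eq π i rfl,
              permVal_ins_gt π i (j := (i : ℕ) + 1) (by omega) (by omega)]
            exact hv _
    · refine ⟨⟨hi0, by omega⟩, ?_, ?_⟩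
      · rw [permVal_ins_eq π i rfl,
          permVal_ins_lt π i (show (i : ℕ) - 1 < (i : ℕ) by omega)]
        exact hv _
      · rw [permVal_ins_eq π i rfl,
          permVal_ins_gt π i (j := (i : ℕ) + 1) (by omega) (by omega)]
        exact hv _

lemma phi_bounds (i q : ℕ) : q ≤ phi i q ∧ phi i q ≤ q + 1 := by
  unfold phi; split_ifs <;> omega

lemma peaks_subset {m : ℕ} (π : Equiv.Perm (Fin m)) {q : ℕ} (h : q ∈ peaks m π) :
    0 < q ∧ q < m - 1 := by
  have := (Finset.mem_filter.mp h).1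
  simpa using this

lemma peaks_gap {m : ℕ} (π : Equiv.Perm (Fin m)) {q q' : ℕ} (h : q ∈ peaks m π)
    (h' : q' ∈ peaks m π) (hlt : q < q') : q + 2 ≤ q' := by
  by_contra hc
  have hq1 : q' = q + 1 := by omega
  have e1 := (Finset.mem_filter.mp h).2.2
  have e2 := (Finset.mem_filter.mp h').2.1
  rw [hq1] at e2
  simp only [Nat.add_sub_cancel] at e2
  omega

lemma phi_injOn {m : ℕ} (π : Equiv.Perm (Fin m)) (i : ℕ) :
    Set.InjOn (phi i) (peaks m π) := by
  intro q hq q' hq' h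
  by_contra hne
  rcases lt_or_gt_of_ne hne with hlt | hlt
  · have := peaks_gap π hq hq' hlt
    have b1 := phi_bounds i q
    have b2 := phi_bounds i q'
    omega
  · have := peaks_gap π hq' hq hlt
    have b1 := phi_bounds i q
    have b2 := phi_bounds i q'
    omega

/-- Positions where inserting the max does not create a new peak. -/
def bad (m : ℕ) (π : Equiv.Perm (Fin m)) : Finset ℕ :=
  {0, m} ∪ (peaks m π ∪ (peaks m π).image (· + 1))

lemma card_bad {m : ℕ} (hm : 1 ≤ m) (π : Equiv.Perm (Fin m)) :
    (bad m π).card = 2 * pk m π + 2 := by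
  have hd2 : Disjoint (peaks m π) ((peaks m π).image (· + 1)) := by
    rw [Finset.disjoint_right]
    intro x hx hx2
    obtain ⟨q, hq, rfl⟩ := Finset.mem_image.mp hx
    have := peaks_gap π hq hx2 (by omega)
    omega
  have hc2 : (peaks m π ∪ (peaks m π).image (· + 1)).card = 2 * pk m π := by
    rw [Finset.card_union_of_disjoint hd2,
      Finset.card_image_of_injective _ (add_left_injective 1), ← pk_eq_card_peaks]
    ring
  have hd1 : Disjoint ({0, m} : Finset ℕ) (peaks m π ∪ (peaks m π).image (· + 1)) := by
    rw [Finset.disjoint_right]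
    intro x hx
    rcases Finset.mem_union.mp hx with h | h
    · have := peaks_subset π h
      simp only [Finset.mem_insert, Finset.mem_singleton]
      omega
    · obtain ⟨q, hq, rfl⟩ := Finset.mem_image.mp h
      have := peaks_subset π hq
      simp only [Finset.mem_insert, Finset.mem_singleton]
      omega
  rw [bad, Finset.card_union_of_disjoint hd1, hc2]
  have : ({0, m} : Finset ℕ).card = 2 := by
    rw [Finset.card_insert_of_notMem (by simp; omega), Finset.card_singleton]
  omega

lemma bad_subset_range {m : ℕ} (π : Equiv.Perm (Fin m)) : bad m π ⊆ Finset.range (m + 1) := by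
  intro x hx
  rw [Finset.mem_range]
  rcases Finset.mem_union.mp hx with h | h
  · simp only [Finset.mem_insert, Finset.mem_singleton] at h
    omega
  · rcases Finset.mem_union.mp h with h | h
    · have := peaks_subset π h; omega
    · obtain ⟨q, hq, rfl⟩ := Finset.mem_image.mp h
      have := peaks_subset π hq; omega

lemma two_pk_le {m : ℕ} (hm : 1 ≤ m) (π : Equiv.Perm (Fin m)) : 2 * pk m π + 2 ≤ m + 1 := by
  rw [← card_bad hm π]
  calc (bad m π).card ≤ (Finset.range (m + 1)).card := Finset.card_le_card (bad_subset_range π)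
  _ = m + 1 := Finset.card_range _

lemma pk_ins {m : ℕ} (hm : 1 ≤ m) (π : Equiv.Perm (Fin m)) (i : Fin (m + 1)) :
    pk (m + 1) (ins π i) = if (i : ℕ) ∈ bad m π then pk m π else pk m π + 1 := by
  have hinj := phi_injOn π (i : ℕ)
  have hcard : ((peaks m π).image (phi (i : ℕ))).card = pk m π := by
    rw [Finset.card_image_of_injOn hinj, pk_eq_card_peaks]
  rw [pk_eq_card_peaks, peaks_ins hm π i]
  by_cases h0 : 0 < (i : ℕ) ∧ (i : ℕ) < m
  · rw [Finset.filter_true_of_mem (fun x _ => h0)]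
    by_cases hadj : (i : ℕ) ∈ peaks m π ∪ (peaks m π).image (· + 1)
    · have hmem : (i : ℕ) ∈ (peaks m π).image (phi (i : ℕ)) := by
        rcases Finset.mem_union.mp hadj with h | h
        · refine Finset.mem_image.mpr ⟨(i : ℕ), h, ?_⟩
          unfold phi
          rw [if_neg (by omega : ¬((i:ℕ) + 1 < (i:ℕ))), if_neg (lt_irrefl _)]
        · obtain ⟨q, hq, hqe⟩ := Finset.mem_image.mp h
          refine Finset.mem_image.mpr ⟨q, hq, ?_⟩
          unfold phi
          have hq1 : q + 1 = (i : ℕ) := hqe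
          rw [if_neg (by omega : ¬(q + 1 < (i:ℕ))), if_neg (by omega : ¬((i:ℕ) < q))]
      rw [Finset.union_eq_left.mpr (Finset.singleton_subset_iff.mpr hmem), hcard,
        if_pos (by rw [bad]; exact Finset.mem_union_right _ hadj)]
    · have hnmem : (i : ℕ) ∉ (peaks m π).image (phi (i : ℕ)) := by
        intro hmem
        obtain ⟨q, hq, hqe⟩ := Finset.mem_image.mp hmem
        unfold phi at hqe
        split_ifs at hqe with c1 c2
        · omega
        · omega
        · -- i ∈ {q, q+1}
          apply hadj
          rcases (show (i : ℕ) = q ∨ (i : ℕ) = q + 1 by omega) with h | h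
          · exact Finset.mem_union_left _ (h ▸ hq)
          · exact Finset.mem_union_right _ (Finset.mem_image.mpr ⟨q, hq, h.symm⟩)
      rw [Finset.card_union_of_disjoint (Finset.disjoint_singleton_right.mpr hnmem), hcard,
        Finset.card_singleton, if_neg]
      rw [bad]
      intro hb
      rcases Finset.mem_union.mp hb with h | h
      · simp only [Finset.mem_insert, Finset.mem_singleton] at h; omega
      · exact hadj h
  · rw [Finset.filter_false_of_mem (fun x _ => h0), Finset.union_empty, hcard, if_pos]
    have : (i : ℕ) = 0 ∨ (i : ℕ) = m := by have := i.isLt; omega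
    rw [bad]
    apply Finset.mem_union_left
    simp only [Finset.mem_insert, Finset.mem_singleton]
    omega

lemma ins_bijective (m : ℕ) :
    Function.Bijective (fun p : Equiv.Perm (Fin m) × Fin (m + 1) => ins p.1 p.2) := by
  rw [Fintype.bijective_iff_injective_and_card]
  constructor
  · rintro ⟨π, i⟩ ⟨π', i'⟩ h
    simp only at h
    have hi : i = i' := by
      have h1 : (ins π' i') i = Fin.last m := by
        rw [← h]; exact insFun_same π i
      have h2 : (ins π' i') i' = Fin.last m := insFun_same π' i'
      exact (ins π' i').injective (h1.trans h2.symm)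
    subst hi
    have hπ : π = π' := by
      apply Equiv.ext
      intro q
      have h1 : (ins π i) (i.succAbove q) = (π q).castSucc := insFun_succAbove π i q
      have h2 : (ins π' i) (i.succAbove q) = (π' q).castSucc := insFun_succAbove π' i q
      rw [h] at h1
      exact Fin.castSucc_injective _ (h1.symm.trans h2)
    rw [hπ]
  · rw [Fintype.card_prod, Fintype.card_perm, Fintype.card_perm, Fintype.card_fin,
      Fintype.card_fin, Nat.factorial_succ, mul_comm]

lemma card_filter_bad {m : ℕ} (hm : 1 ≤ m) (π : Equiv.Perm (Fin m)) :
    ((Finset.univ : Finset (Fin (m + 1))).filter (fun i : Fin (m + 1) => (i : ℕ) ∈ bad m π)).card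
      = 2 * pk m π + 2 := by
  rw [← card_bad hm π]
  refine Finset.card_bij' (fun (a : Fin (m + 1)) _ => (a : ℕ))
    (fun b hb => (⟨b, Finset.mem_range.mp (bad_subset_range π hb)⟩ : Fin (m + 1))) ?_ ?_ ?_ ?_
  · intro a ha; exact (Finset.mem_filter.mp ha).2
  · intro b hb; exact Finset.mem_filter.mpr ⟨Finset.mem_univ _, hb⟩
  · intro a ha; rfl
  · intro b hb; rfl

lemma sum_pow_ins {m : ℕ} (hm : 1 ≤ m) (π : Equiv.Perm (Fin m)) :
    (∑ i : Fin (m + 1), (Polynomial.X : Polynomial ℤ) ^ pk (m + 1) (ins π i))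
      = (2 * pk m π + 2) • (Polynomial.X : Polynomial ℤ) ^ pk m π
        + (m - 1 - 2 * pk m π) • (Polynomial.X : Polynomial ℤ) ^ (pk m π + 1) := by
  classical
  rw [← Finset.sum_filter_add_sum_filter_not Finset.univ (fun i : Fin (m + 1) => (i : ℕ) ∈ bad m π)]
  have e1 : ∀ i ∈ Finset.univ.filter (fun i : Fin (m + 1) => (i : ℕ) ∈ bad m π),
      (Polynomial.X : Polynomial ℤ) ^ pk (m + 1) (ins π i) = Polynomial.X ^ pk m π := by
    intro i hi
    rw [pk_ins hm π i, if_pos (Finset.mem_filter.mp hi).2]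
  have e2 : ∀ i ∈ Finset.univ.filter (fun i : Fin (m + 1) => ¬((i : ℕ) ∈ bad m π)),
      (Polynomial.X : Polynomial ℤ) ^ pk (m + 1) (ins π i) = Polynomial.X ^ (pk m π + 1) := by
    intro i hi
    rw [pk_ins hm π i, if_neg (Finset.mem_filter.mp hi).2]
  rw [Finset.sum_congr rfl e1, Finset.sum_congr rfl e2, Finset.sum_const, Finset.sum_const,
    card_filter_bad hm π, Finset.filter_not, Finset.card_sdiff_of_subset (Finset.filter_subset _ _),
    Finset.card_univ, Fintype.card_fin, card_filter_bad hm π]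
  congr 2
  omega

lemma ppoly_succ {m : ℕ} (hm : 1 ≤ m) :
    Ppoly (m + 1) = ∑ π : Equiv.Perm (Fin m),
      ((2 * pk m π + 2) • (Polynomial.X : Polynomial ℤ) ^ pk m π
        + (m - 1 - 2 * pk m π) • (Polynomial.X : Polynomial ℤ) ^ (pk m π + 1)) := by
  rw [Ppoly, ← Function.Bijective.sum_comp (ins_bijective m)
    (fun σ => (Polynomial.X : Polynomial ℤ) ^ pk (m + 1) σ), Fintype.sum_prod_type]
  exact Finset.sum_congr rfl (fun π _ => sum_pow_ins hm π)

lemma per_term (k r : ℕ) :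
    (2 * k + 2) • (Polynomial.X : Polynomial ℤ) ^ k + r • (Polynomial.X : Polynomial ℤ) ^ (k + 1)
      = (((2 * k + 1 + r : ℕ) : Polynomial ℤ) - 1) * Polynomial.X * Polynomial.X ^ k
        + 2 * Polynomial.X ^ k
        + 2 * (1 - Polynomial.X) * Polynomial.X * Polynomial.derivative (Polynomial.X ^ k) := by
  rw [Polynomial.derivative_X_pow, nsmul_eq_mul, nsmul_eq_mul, Polynomial.C_eq_natCast]
  cases k with
  | zero => push_cast; ring
  | succ k =>
    rw [show k + 1 - 1 = k from rfl]
    push_cast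
    ring

lemma ppoly_rec {m : ℕ} (hm : 1 ≤ m) :
    Ppoly (m + 1) = ((m : Polynomial ℤ) - 1) * Polynomial.X * Ppoly m + 2 * Ppoly m
      + 2 * (1 - Polynomial.X) * Polynomial.X * Polynomial.derivative (Ppoly m) := by
  rw [ppoly_succ hm]
  conv_rhs => rw [Ppoly]
  rw [Polynomial.derivative_sum, Finset.mul_sum, Finset.mul_sum, Finset.mul_sum,
    ← Finset.sum_add_distrib, ← Finset.sum_add_distrib]
  refine Finset.sum_congr rfl (fun π _ => ?_)
  have hk := two_pk_le hm π
  obtain ⟨r, hr⟩ : ∃ r, m = 2 * pk m π + 1 + r := ⟨m - 1 - 2 * pk m π, by omega⟩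
  have h2 : m - 1 - 2 * pk m π = r := by omega
  rw [h2]
  rw [show ((m : ℕ) : Polynomial ℤ) = ((2 * pk m π + 1 + r : ℕ) : Polynomial ℤ) from by
    rw [← hr]]
  exact per_term (pk m π) r

lemma g_rec {m : ℕ} (hm : 1 ≤ m) :
    Polynomial.X * Ppoly (m + 1)
      = ((m : Polynomial ℤ) + 1) * Polynomial.X * (Polynomial.X * Ppoly m)
        + 2 * Polynomial.X * (1 - Polynomial.X)
          * Polynomial.derivative (Polynomial.X * Ppoly m) := by
  rw [ppoly_rec hm, Polynomial.derivative_mul, Polynomial.derivative_X]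
  ring

lemma U_zero : ∀ n : ℕ, 1 ≤ n → U n 0 = 0
  | 1, _ => by simp [U]
  | n + 2, _ => by simp [U]

lemma U_big : ∀ n k : ℕ, n < k → U n k = 0
  | 0, k, _ => by simp [U]
  | 1, k, h => by
    rw [U]
    rw [if_neg (by omega)]
  | n + 2, k + 1, h => by
    rw [U, U_big (n + 1) k (by omega), U_big (n + 1) (k + 1) (by omega)]
    ring

lemma U_rec (n k : ℕ) (hn : 1 ≤ n) (hk : 1 ≤ k) :
    U (n + 1) k = U n (k - 1) + (k : ℤ) ^ 2 * U n k := by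
  obtain ⟨n, rfl⟩ : ∃ a, n = a + 1 := ⟨n - 1, by omega⟩
  obtain ⟨k, rfl⟩ : ∃ a, k = a + 1 := ⟨k - 1, by omega⟩
  rw [show n + 1 + 1 = n + 2 from rfl, U, show k + 1 - 1 = k from rfl]
  push_cast
  ring

/-- coefficients -/
def bcoef (n j : ℕ) : ℤ := 2 ^ (2 * n - 2 * j) * ((2 * j).factorial : ℤ) * U n j

lemma op1 (n j : ℕ) (h1 : 1 ≤ j) (h2 : j ≤ n) :
    ((2 * n + 1 : ℕ) : Polynomial ℤ) * Polynomial.X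
        * (Polynomial.X ^ j * (1 - Polynomial.X) ^ (n - j))
      + 2 * Polynomial.X * (1 - Polynomial.X)
        * Polynomial.derivative (Polynomial.X ^ j * (1 - Polynomial.X) ^ (n - j))
    = ((2 * j + 1 : ℕ) : Polynomial ℤ)
        * (Polynomial.X ^ (j + 1) * (1 - Polynomial.X) ^ ((n + 1) - (j + 1)))
      + ((2 * j : ℕ) : Polynomial ℤ)
        * (Polynomial.X ^ j * (1 - Polynomial.X) ^ ((n + 1) - j)) := by
  obtain ⟨a, rfl⟩ : ∃ a, j = a + 1 := ⟨j - 1, by omega⟩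
  obtain ⟨d, rfl⟩ : ∃ d, n = (a + 1) + d := ⟨n - (a + 1), by omega⟩
  rw [show (a + 1) + d - (a + 1) = d by omega,
    show ((a + 1) + d + 1) - ((a + 1) + 1) = d by omega,
    show ((a + 1) + d + 1) - (a + 1) = d + 1 by omega]
  rw [Polynomial.derivative_mul, Polynomial.derivative_X_pow, Polynomial.derivative_pow,
    Polynomial.derivative_sub, Polynomial.derivative_one, Polynomial.derivative_X,
    Polynomial.C_eq_natCast, Polynomial.C_eq_natCast]
  cases d with
  | zero => push_cast; ring
  | succ e =>
    rw [show a + 1 - 1 = a from rfl, show e + 1 - 1 = e from rfl]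
    push_cast
    ring

lemma op2 (N k : ℕ) (h1 : 1 ≤ k) (h2 : k ≤ N) :
    ((2 * N : ℕ) : Polynomial ℤ) * Polynomial.X
        * (Polynomial.X ^ k * (1 - Polynomial.X) ^ (N - k))
      + 2 * Polynomial.X * (1 - Polynomial.X)
        * Polynomial.derivative (Polynomial.X ^ k * (1 - Polynomial.X) ^ (N - k))
    = ((2 * k : ℕ) : Polynomial ℤ) * (Polynomial.X ^ k * (1 - Polynomial.X) ^ (N - k)) := by
  obtain ⟨a, rfl⟩ : ∃ a, k = a + 1 := ⟨k - 1, by omega⟩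
  obtain ⟨d, rfl⟩ : ∃ d, N = (a + 1) + d := ⟨N - (a + 1), by omega⟩
  rw [show (a + 1) + d - (a + 1) = d by omega]
  rw [Polynomial.derivative_mul, Polynomial.derivative_X_pow, Polynomial.derivative_pow,
    Polynomial.derivative_sub, Polynomial.derivative_one, Polynomial.derivative_X,
    Polynomial.C_eq_natCast, Polynomial.C_eq_natCast]
  cases d with
  | zero => push_cast; ring
  | succ e =>
    rw [show a + 1 - 1 = a from rfl, show e + 1 - 1 = e from rfl]
    push_cast
    ring

lemma bcoef_zero {n : ℕ} (hn : 1 ≤ n) : bcoef n 0 = 0 := by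
  rw [bcoef, U_zero n hn, mul_zero]

lemma bcoef_big {n k : ℕ} (h : n < k) : bcoef n k = 0 := by
  rw [bcoef, U_big n k h, mul_zero]

def dcoef (n k : ℕ) : ℤ := (2 * (k : ℤ) - 1) * bcoef n (k - 1) + 2 * (k : ℤ) * bcoef n k

lemma bcoef_rec (n k : ℕ) (hn : 1 ≤ n) (h1 : 1 ≤ k) (h2 : k ≤ n + 1) :
    bcoef (n + 1) k = 2 * (k : ℤ) * dcoef n k := by
  rw [dcoef]
  obtain ⟨a, rfl⟩ : ∃ a, k = a + 1 := ⟨k - 1, by omega⟩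
  rw [show a + 1 - 1 = a from rfl]
  by_cases hkn : a + 1 ≤ n
  · obtain ⟨e, he⟩ : ∃ e, n = a + 1 + e := ⟨n - (a + 1), by omega⟩
    subst he
    rw [bcoef, bcoef, bcoef, U_rec _ _ hn h1, show a + 1 - 1 = a from rfl]
    rw [show 2 * (a + 1 + e + 1) - 2 * (a + 1) = 2 * e + 2 by omega,
      show 2 * (a + 1 + e) - 2 * a = 2 * e + 2 by omega,
      show 2 * (a + 1 + e) - 2 * (a + 1) = 2 * e by omega,
      show 2 * (a + 1) = 2 * a + 1 + 1 by omega,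
      Nat.factorial_succ, Nat.factorial_succ]
    push_cast
    ring
  · have hk : a = n := by omega
    subst hk
    rw [bcoef, bcoef, bcoef, U_rec _ _ hn h1, show a + 1 - 1 = a from rfl,
      U_big a (a + 1) (by omega), show 2 * a - 2 * a = 0 by omega,
      show 2 * (a + 1) = 2 * a + 1 + 1 by omega,
      Nat.factorial_succ, Nat.factorial_succ]
    simp only [Nat.sub_self, pow_zero]
    push_cast
    ring

lemma stepA (n : ℕ) (hn : 1 ≤ n)
    (IH : Polynomial.X * Ppoly (2 * n) = ∑ j ∈ Finset.Icc 1 n,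
      Polynomial.C (bcoef n j) * (Polynomial.X ^ j * (1 - Polynomial.X) ^ (n - j))) :
    Polynomial.X * Ppoly (2 * n + 1) = ∑ k ∈ Finset.Icc 1 (n + 1),
      Polynomial.C (dcoef n k) * (Polynomial.X ^ k * (1 - Polynomial.X) ^ ((n + 1) - k)) := by
  have h2n : 1 ≤ 2 * n := by omega
  rw [g_rec h2n, IH, Polynomial.derivative_sum, Finset.mul_sum, Finset.mul_sum,
    ← Finset.sum_add_distrib]
  have key : ∀ j ∈ Finset.Icc 1 n,
      ((2 * n : ℕ) + 1 : Polynomial ℤ) * Polynomial.X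
          * (Polynomial.C (bcoef n j) * (Polynomial.X ^ j * (1 - Polynomial.X) ^ (n - j)))
        + 2 * Polynomial.X * (1 - Polynomial.X)
          * Polynomial.derivative
              (Polynomial.C (bcoef n j) * (Polynomial.X ^ j * (1 - Polynomial.X) ^ (n - j)))
      = Polynomial.C ((2 * ((j : ℤ) + 1) - 1) * bcoef n j)
          * (Polynomial.X ^ (j + 1) * (1 - Polynomial.X) ^ ((n + 1) - (j + 1)))
        + Polynomial.C (2 * (j : ℤ) * bcoef n j)
          * (Polynomial.X ^ j * (1 - Polynomial.X) ^ ((n + 1) - j)) := by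
    intro j hj
    rw [Finset.mem_Icc] at hj
    rw [Polynomial.derivative_C_mul]
    have h := op1 n j hj.1 hj.2
    calc ((2 * n : ℕ) + 1 : Polynomial ℤ) * Polynomial.X
          * (Polynomial.C (bcoef n j) * (Polynomial.X ^ j * (1 - Polynomial.X) ^ (n - j)))
        + 2 * Polynomial.X * (1 - Polynomial.X)
          * (Polynomial.C (bcoef n j)
              * Polynomial.derivative (Polynomial.X ^ j * (1 - Polynomial.X) ^ (n - j)))
        = Polynomial.C (bcoef n j)
          * (((2 * n + 1 : ℕ) : Polynomial ℤ) * Polynomial.X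
              * (Polynomial.X ^ j * (1 - Polynomial.X) ^ (n - j))
            + 2 * Polynomial.X * (1 - Polynomial.X)
              * Polynomial.derivative (Polynomial.X ^ j * (1 - Polynomial.X) ^ (n - j))) := by
          push_cast; ring
      _ = Polynomial.C (bcoef n j)
          * (((2 * j + 1 : ℕ) : Polynomial ℤ)
              * (Polynomial.X ^ (j + 1) * (1 - Polynomial.X) ^ ((n + 1) - (j + 1)))
            + ((2 * j : ℕ) : Polynomial ℤ)
              * (Polynomial.X ^ j * (1 - Polynomial.X) ^ ((n + 1) - j))) := by rw [h]
      _ = _ := by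
          simp only [map_mul, map_sub, map_add, map_one, map_ofNat, Polynomial.C_eq_natCast]
          push_cast
          ring
  rw [Finset.sum_congr rfl key, Finset.sum_add_distrib]
  have r1 : (∑ j ∈ Finset.Icc 1 n, Polynomial.C ((2 * ((j : ℤ) + 1) - 1) * bcoef n j)
        * (Polynomial.X ^ (j + 1) * (1 - Polynomial.X) ^ ((n + 1) - (j + 1))))
      = ∑ k ∈ Finset.Icc 2 (n + 1), Polynomial.C ((2 * (k : ℤ) - 1) * bcoef n (k - 1))
        * (Polynomial.X ^ k * (1 - Polynomial.X) ^ ((n + 1) - k)) := by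
    rw [show Finset.Icc 2 (n + 1) = (Finset.Icc 1 n).image (· + 1) by
      rw [Finset.image_add_right_Icc]]
    rw [Finset.sum_image (by intro a _ b _ h; simp only at h; omega)]
    refine Finset.sum_congr rfl (fun j hj => ?_)
    rw [show j + 1 - 1 = j from rfl]
    push_cast
    ring_nf
  rw [r1]
  have e1 : Finset.Icc 1 (n + 1) = insert 1 (Finset.Icc 2 (n + 1)) := by
    ext x; simp only [Finset.mem_Icc, Finset.mem_insert]; omega
  have e2 : Finset.Icc 1 (n + 1) = insert (n + 1) (Finset.Icc 1 n) := by
    ext x; simp only [Finset.mem_Icc, Finset.mem_insert]; omega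
  conv_rhs => rw [show (∑ k ∈ Finset.Icc 1 (n + 1), Polynomial.C (dcoef n k)
    * (Polynomial.X ^ k * (1 - Polynomial.X) ^ ((n + 1) - k)))
      = (∑ k ∈ Finset.Icc 1 (n + 1), (Polynomial.C ((2 * (k : ℤ) - 1) * bcoef n (k - 1))
          * (Polynomial.X ^ k * (1 - Polynomial.X) ^ ((n + 1) - k))
        + Polynomial.C (2 * (k : ℤ) * bcoef n k)
          * (Polynomial.X ^ k * (1 - Polynomial.X) ^ ((n + 1) - k)))) from
      Finset.sum_congr rfl (fun k _ => by rw [dcoef, map_add, add_mul])]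
  rw [Finset.sum_add_distrib]
  congr 1
  · rw [e1, Finset.sum_insert (by simp), bcoef_zero hn]
    simp
  · rw [e2, Finset.sum_insert (by simp), bcoef_big (by omega : n < n + 1)]
    simp

lemma stepB (n : ℕ) (hn : 1 ≤ n)
    (hA : Polynomial.X * Ppoly (2 * n + 1) = ∑ k ∈ Finset.Icc 1 (n + 1),
      Polynomial.C (dcoef n k) * (Polynomial.X ^ k * (1 - Polynomial.X) ^ ((n + 1) - k))) :
    Polynomial.X * Ppoly (2 * (n + 1)) = ∑ k ∈ Finset.Icc 1 (n + 1),
      Polynomial.C (bcoef (n + 1) k)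
        * (Polynomial.X ^ k * (1 - Polynomial.X) ^ ((n + 1) - k)) := by
  have h2n : 1 ≤ 2 * n + 1 := by omega
  rw [show 2 * (n + 1) = (2 * n + 1) + 1 by ring, g_rec h2n, hA, Polynomial.derivative_sum,
    Finset.mul_sum, Finset.mul_sum, ← Finset.sum_add_distrib]
  refine Finset.sum_congr rfl (fun k hk => ?_)
  rw [Finset.mem_Icc] at hk
  rw [Polynomial.derivative_C_mul]
  have h := op2 (n + 1) k hk.1 hk.2
  calc ((2 * n + 1 : ℕ) + 1 : Polynomial ℤ) * Polynomial.X
        * (Polynomial.C (dcoef n k) * (Polynomial.X ^ k * (1 - Polynomial.X) ^ ((n + 1) - k)))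
      + 2 * Polynomial.X * (1 - Polynomial.X)
        * (Polynomial.C (dcoef n k)
            * Polynomial.derivative (Polynomial.X ^ k * (1 - Polynomial.X) ^ ((n + 1) - k)))
      = Polynomial.C (dcoef n k)
        * (((2 * (n + 1) : ℕ) : Polynomial ℤ) * Polynomial.X
            * (Polynomial.X ^ k * (1 - Polynomial.X) ^ ((n + 1) - k))
          + 2 * Polynomial.X * (1 - Polynomial.X)
            * Polynomial.derivative (Polynomial.X ^ k * (1 - Polynomial.X) ^ ((n + 1) - k))) := by
        push_cast; ring
    _ = Polynomial.C (dcoef n k)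
        * (((2 * k : ℕ) : Polynomial ℤ)
            * (Polynomial.X ^ k * (1 - Polynomial.X) ^ ((n + 1) - k))) := by rw [h]
    _ = _ := by
        rw [bcoef_rec n k hn hk.1 hk.2]
        simp only [map_mul, map_ofNat, Polynomial.C_eq_natCast]
        push_cast
        ring

lemma ppoly_two : Ppoly 2 = 2 := by
  have hpk : ∀ π : Equiv.Perm (Fin 2), pk 2 π = 0 := by
    intro π
    rw [pk, show Finset.Ioo 0 (2 - 1) = (∅ : Finset ℕ) from by decide, Finset.filter_empty,
      Finset.card_empty]
  rw [Ppoly]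
  rw [Finset.sum_congr rfl (fun π _ => by rw [hpk π, pow_zero])]
  rw [Finset.sum_const, Finset.card_univ, Fintype.card_perm, Fintype.card_fin]
  norm_num [Nat.factorial]

lemma main_aux : ∀ n : ℕ, 1 ≤ n → Polynomial.X * Ppoly (2 * n) = ∑ j ∈ Finset.Icc 1 n,
    Polynomial.C (bcoef n j) * (Polynomial.X ^ j * (1 - Polynomial.X) ^ (n - j)) := by
  intro n hn
  induction n with
  | zero => omega
  | succ m IH =>
    by_cases hm : 1 ≤ m
    · exact stepB m hm (stepA m hm (IH hm))
    · have : m = 0 := by omega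
      subst this
      rw [show 2 * 1 = 2 from rfl, ppoly_two]
      rw [show Finset.Icc 1 1 = {1} from rfl, Finset.sum_singleton]
      rw [bcoef, show 2 * 1 - 2 * 1 = 0 by omega, show U 1 1 = 1 from by simp [U]]
      simp [Nat.factorial]
      ring

/-- For `n ≥ 1`, `x P_{2n}(x) = Σ_{j=1}^n 2^{2n-2j} (2j)! U(n,j) x^j (1-x)^{n-j}` in `ℤ[x]`. -/
theorem stmt6 (n : ℕ) (hn : 1 ≤ n) :
    Polynomial.X * Ppoly (2 * n) =
      ∑ j ∈ Finset.Icc 1 n,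
        Polynomial.C ((2 : ℤ) ^ (2 * n - 2 * j) * ((2 * j).factorial : ℤ) * U n j) *
          Polynomial.X ^ j * (1 - Polynomial.X) ^ (n - j) := by
  rw [main_aux n hn]
  exact Finset.sum_congr rfl (fun j _ => by rw [bcoef]; ring)
end
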